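/- arXiv:1904.00626 — 3 statements merged into one kernel-verified Lean document; each statement's English description precedes it below -/
import Mathlib

section
/- Suppose N is prime and let Θ^splay be the splay configuration θ_k = 2π(k−1)/N. Then either the effective coupling graph at Θ^splay is the empty graph (this happens when 2πn/N ∈ DZ(g) for all n with 1 ≤ n < N), or it contains a directed cycle passing through all N vertices; in the latter case the effective coupling graph is strongly connected. -/
open Real Set

/-- The dead zone of a coupling function: the set of points at which `g` is locally zero. -/
def DZ (g : ℝ → ℝ) : Set ℝ := {x | ∃ U : Set ℝ, IsOpen U ∧ x ∈ U ∧ ∀ y ∈ U, g y = 0}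

/-!
By `2π`-periodicity of `g`, whether `θ_j - θ_k` lies in `DZ g` depends only on
`j - k ∈ ZMod N`, so the effective coupling graph at the splay state is a circulant digraph.
If it has an edge `j → k`, then `a → a + (k - j)` is an edge for every `a`; as `N` is prime,
`k - j` generates `ZMod N`, so `i ↦ i * (k - j)` traverses a Hamiltonian cycle, and any digraph
with a Hamiltonian cycle is strongly connected.
-/

theorem mem_DZ_of_add_mem {g : ℝ → ℝ} {c x : ℝ} (hper : Function.Periodic g c)
    (hx : x + c ∈ DZ g) : x ∈ DZ g := by
  obtain ⟨U, hU, hxU, hgU⟩ := hx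
  exact ⟨(· + c) ⁻¹' U, hU.preimage (continuous_add_const c), hxU,
    fun y hy => (hper y).symm.trans (hgU _ hy)⟩

theorem mem_DZ_add_iff {g : ℝ → ℝ} {c : ℝ} (hper : Function.Periodic g c) (x : ℝ) :
    x + c ∈ DZ g ↔ x ∈ DZ g :=
  ⟨mem_DZ_of_add_mem hper, fun hx => mem_DZ_of_add_mem hper.neg (by rwa [add_neg_cancel_right])⟩

theorem splay_sub_mem_DZ_iff {N : ℕ} [NeZero N] {g : ℝ → ℝ}
    (hper : Function.Periodic g (2 * π)) (a b : ZMod N) :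
    2 * π * a.val / N - 2 * π * b.val / N ∈ DZ g ↔ 2 * π * (a - b).val / N ∈ DZ g := by
  have hN : (N : ℝ) ≠ 0 := Nat.cast_ne_zero.2 (NeZero.ne N)
  obtain ⟨z, hz⟩ : (N : ℤ) ∣ a.val - b.val - (a - b).val := by
    rw [← ZMod.intCast_zmod_eq_zero_iff_dvd]
    push_cast
    simp only [ZMod.natCast_val, ZMod.cast_id', id, sub_self]
  have hdiff :
      2 * π * a.val / N - 2 * π * b.val / N = 2 * π * (a - b).val / N + z * (2 * π) := by
    have hz' : (a.val : ℝ) - b.val - (a - b).val = N * z := by exact_mod_cast hz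
    field_simp
    linear_combination hz'
  rw [hdiff, mem_DZ_add_iff (hper.int_mul z)]

section Cycle

variable {α : Type*} {R : α → α → Prop}

theorem Relation.TransGen.apply_add_natCast {ι : Type*} [AddMonoidWithOne ι] {c : ι → α}
    (hc : ∀ i, R (c i) (c (i + 1))) (i : ι) {k : ℕ} (hk : k ≠ 0) :
    Relation.TransGen R (c i) (c (i + k)) := by
  induction k with
  | zero => exact absurd rfl hk
  | succ k ih =>
    rcases eq_or_ne k 0 with rfl | hk0
    · simpa using Relation.TransGen.single (hc i)
    · simpa [add_assoc] using (ih hk0).tail (hc (i + k))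

theorem Relation.transGen_of_bijective_cycle {N : ℕ} [NeZero N] {c : ZMod N → α}
    (hbij : Function.Bijective c) (hc : ∀ i, R (c i) (c (i + 1))) {v w : α} (hvw : v ≠ w) :
    Relation.TransGen R v w := by
  obtain ⟨i, rfl⟩ := hbij.surjective v
  obtain ⟨j, rfl⟩ := hbij.surjective w
  have hij : (j - i).val ≠ 0 :=
    (ZMod.val_ne_zero _).2 (sub_ne_zero.2 (ne_of_apply_ne c hvw).symm)
  simpa using Relation.TransGen.apply_add_natCast hc i hij

end Cycle

theorem ZMod.exists_bijective_cycle_of_forall_rel_add {p : ℕ} [Fact p.Prime]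
    {R : ZMod p → ZMod p → Prop} {d : ZMod p} (hd : d ≠ 0) (h : ∀ a, R a (a + d)) :
    ∃ c : ZMod p → ZMod p, Function.Bijective c ∧ ∀ i, R (c i) (c (i + 1)) :=
  ⟨(· * d), (Equiv.mulRight₀ d hd).bijective, fun i => by simpa [add_mul] using h (i * d)⟩

/-- for N prime, the effective coupling graph at the splay configuration is
either empty (which happens when all 2πn/N, 1 ≤ n < N, lie in DZ(g)) or contains a directed
Hamiltonian cycle, in which case it is strongly connected. -/
theorem splay_prime (N : ℕ) (hp : N.Prime) (g : ℝ → ℝ)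
    (hper : Function.Periodic g (2 * Real.pi))
    (θ : ZMod N → ℝ) (hθ : ∀ k : ZMod N, θ k = 2 * Real.pi * k.val / N) :
    ((∀ n : ℕ, 1 ≤ n → n < N → (2 * Real.pi * n / N) ∈ DZ g) →
        ∀ j k : ZMod N, ¬(j ≠ k ∧ θ j - θ k ∉ DZ g)) ∧
    ((∀ j k : ZMod N, ¬(j ≠ k ∧ θ j - θ k ∉ DZ g)) ∨
      ((∃ c : ZMod N → ZMod N, Function.Bijective c ∧
          ∀ i : ZMod N, c i ≠ c (i + 1) ∧ θ (c i) - θ (c (i + 1)) ∉ DZ g) ∧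
        ∀ v w : ZMod N, v ≠ w →
          Relation.TransGen (fun a b : ZMod N => a ≠ b ∧ θ a - θ b ∉ DZ g) v w)) := by
  have : Fact N.Prime := ⟨hp⟩
  have hdz : ∀ a b, θ a - θ b ∈ DZ g ↔ 2 * π * (a - b).val / N ∈ DZ g := fun a b => by
    rw [hθ, hθ, splay_sub_mem_DZ_iff hper]
  refine ⟨fun hall j k ⟨hjk, hjk_dz⟩ =>
    hjk_dz ((hdz j k).2 (hall _ (ZMod.val_pos.2 (sub_ne_zero.2 hjk)) (ZMod.val_lt _))), ?_⟩
  by_cases hempty : ∀ j k : ZMod N, ¬(j ≠ k ∧ θ j - θ k ∉ DZ g)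
  · exact Or.inl hempty
  push Not at hempty
  obtain ⟨j, k, hjk, hjk_dz⟩ := hempty
  have hstep : ∀ a, a ≠ a + (k - j) ∧ θ a - θ (a + (k - j)) ∉ DZ g := fun a => by
    refine ⟨fun h => hjk (sub_eq_zero.1 (left_eq_add.1 h)).symm, ?_⟩
    rwa [hdz, show a - (a + (k - j)) = j - k by ring, ← hdz]
  obtain ⟨c, hbij, hc⟩ := ZMod.exists_bijective_cycle_of_forall_rel_add
    (R := fun a b => a ≠ b ∧ θ a - θ b ∉ DZ g) (sub_ne_zero.2 hjk.symm) hstep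
  exact Or.inr ⟨⟨c, hbij, hc⟩,
    fun v w hvw => Relation.transGen_of_bijective_cycle hbij hc hvw⟩
end

section
/- Let 0 < a < π/2^{N−1} and 0 < δ < a. Suppose θ ∈ ℝ^N (lifted to the real line) satisfies θ_{i+1} − θ_i ≥ θ_i − θ_1 + a for i = 1,…,N−1 and θ_N − θ_1 < π − a. Then all pairwise differences θ_j − θ_k with 1 ≤ k < j ≤ N are distinct, lie in (0, π − a), and any two distinct such differences are at least a apart. -/
open Real Set

/-- separation lemma: under the recursive gap conditions the upward differences
θ_j − θ_k (k < j) are distinct, lie in (0, π − a) and are pairwise at least a apart. -/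
theorem separation_lemma (N : ℕ) (hN : 2 ≤ N) (a δ : ℝ)
    (ha : 0 < a) (ha' : a < Real.pi / 2 ^ (N - 1)) (hδ : 0 < δ) (hδa : δ < a)
    (θ : ℕ → ℝ)
    (hgap : ∀ i, 1 ≤ i → i ≤ N - 1 → θ (i + 1) - θ i ≥ θ i - θ 1 + a)
    (htot : θ N - θ 1 < Real.pi - a) :
    ∀ j k, 1 ≤ k → k < j → j ≤ N →
      θ j - θ k ∈ Set.Ioo 0 (Real.pi - a) ∧
      ∀ j' k', 1 ≤ k' → k' < j' → j' ≤ N → (j, k) ≠ (j', k') →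
        θ j - θ k ≠ θ j' - θ k' ∧ a ≤ |(θ j - θ k) - (θ j' - θ k')| := by
  -- θ i - θ 1 ≥ 0 for 1 ≤ i ≤ N
  have hA : ∀ i, 1 ≤ i → i ≤ N → 0 ≤ θ i - θ 1 := by
    intro i
    induction i with
    | zero => omega
    | succ n ih =>
      intro _ hn
      rcases Nat.eq_zero_or_pos n with h0 | h1
      · subst h0; simp
      · have hg := hgap n h1 (by omega)
        have := ih h1 (by omega)
        linarith
  -- monotonicity
  have hB : ∀ m n, 1 ≤ m → m ≤ n → n ≤ N → θ m ≤ θ n := by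
    intro m n hm hmn
    induction n with
    | zero => omega
    | succ p ih =>
      intro hn
      rcases Nat.lt_or_ge m (p + 1) with h | h
      · have hp1 : 1 ≤ p := by omega
        have hg := hgap p hp1 (by omega)
        have hAp := hA p hp1 (by omega)
        have := ih (by omega) (by omega)
        linarith
      · have hme : m = p + 1 := by omega
        subst hme; exact le_rfl
  -- separation between distinct points
  have hC : ∀ m n, 1 ≤ m → m < n → n ≤ N → a ≤ θ n - θ m := by
    intro m n hm hmn hnN
    have h1 := hB (m + 1) n (by omega) (by omega) hnN
    have hg := hgap m hm (by omega)
    have hAm := hA m hm (by omega)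
    linarith
  -- key separation between differences with j' < j
  have hD : ∀ j k j' k', 1 ≤ k → k < j → 1 ≤ k' → k' < j' → j' < j → j ≤ N →
      a ≤ (θ j - θ k) - (θ j' - θ k') := by
    intro j k j' k' hk hkj hk' hkj' hj'j hjN
    obtain ⟨p, rfl⟩ : ∃ p, j = p + 1 := ⟨j - 1, by omega⟩
    have hp1 : 1 ≤ p := by omega
    have hg := hgap p hp1 (by omega)
    have h2 : θ k ≤ θ p := hB k p hk (by omega) (by omega)
    have h3 : θ j' ≤ θ p := hB j' p (by omega) (by omega) (by omega)
    have h4 : θ 1 ≤ θ k' := hB 1 k' le_rfl hk' (by omega)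
    linarith
  intro j k hk hkj hjN
  have hjk := hC k j hk hkj hjN
  have hub : θ j - θ k < Real.pi - a := by
    have h1 := hB j N (by omega) hjN le_rfl
    have h2 := hB 1 k le_rfl hk (by omega)
    linarith
  refine ⟨⟨by linarith, hub⟩, ?_⟩
  intro j' k' hk' hkj' hj'N hne
  have hsep : a ≤ |(θ j - θ k) - (θ j' - θ k')| := by
    rcases lt_trichotomy j j' with h | h | h
    · have := hD j' k' j k hk' hkj' hk hkj h hj'N
      rw [abs_sub_comm]
      exact this.trans (le_abs_self _)
    · subst h
      have hkk' : k ≠ k' := by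
        intro hh; exact hne (by rw [hh])
      rcases lt_or_gt_of_ne hkk' with hlt | hgt
      · have := hC k k' hk hlt (by omega)
        have : a ≤ (θ j - θ k) - (θ j - θ k') := by linarith
        exact this.trans (le_abs_self _)
      · have := hC k' k hk' hgt (by omega)
        have h2 : a ≤ (θ j - θ k') - (θ j - θ k) := by linarith
        rw [abs_sub_comm]
        exact h2.trans (le_abs_self _)
    · have := hD j k j' k' hk hkj hk' hkj' h hjN
      exact this.trans (le_abs_self _)
  refine ⟨?_, hsep⟩
  intro heq
  rw [heq] at hsep
  simp at hsep
  linarith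
end

section
/- Let H be a directed graph on N vertices admitting a spanning diverging tree (a weakly connected subgraph in which one root vertex has no incoming edge and every other vertex has exactly one incoming edge), and let T be an N×N matrix with T_{jk} > 0 whenever (j,k) ∈ E(H), T_{jk} = 0 for j ≠ k with (j,k) ∉ E(H), and T_{kk} = −Σ_{j≠k} T_{jk}. Then 0 is a simple eigenvalue of T and all other eigenvalues of T have strictly negative real part. -/
/-! Write `M = Tᵀ`: it has nonnegative off-diagonal entries and zero row sums, and it has the
same characteristic polynomial as `T`. Each Gershgorin disc of `M` has centre `-ρ` and radius `ρ`
for some `ρ ≥ 0`, so it meets the closed right half-plane only at `0`.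

For the simplicity of `0`, work with real vectors (`M` is real). Maximum principle: at a maximum
of `u` with `M u = 0`, the value of `u` is shared by every `j` with `M i j > 0`, i.e. by the parent
in the tree; climbing to the root shows that the root attains both the maximum and the minimum, so
`ker M` is spanned by `1`. Comparing `M u` at a maximum and at a minimum of `u` shows that `M u` is
never a nonzero constant, so `ker M² = ker M` and the generalized `0`-eigenspace is `ker M`. -/

open Real Set

open Matrix Relation Finset

theorem reflTransGen_of_unique_parent {α : Type*} {R : α → α → Prop} {r : α}
    (hroot : ∀ j, ¬ R j r) (hparent : ∀ j j' k, R j k → R j' k → j = j') {v : α}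
    (hv : ReflTransGen (fun x y => R x y ∨ R y x) r v) : ReflTransGen R r v := by
  induction hv with
  | refl => exact .refl
  | @tail b c _ hbc ih =>
    rcases hbc with hbc | hcb
    · exact ih.tail hbc
    · rcases ih.cases_tail with rfl | ⟨a, hra, hab⟩
      · exact absurd hcb (hroot c)
      · rwa [hparent c a b hcb hab]

theorem Complex.re_neg_of_mem_closedBall_neg {z : ℂ} {ρ : ℝ}
    (hz : z ∈ Metric.closedBall (-(ρ : ℂ)) ρ) (h0 : z ≠ 0) : z.re < 0 := by
  rw [Metric.mem_closedBall, dist_eq_norm, sub_neg_eq_add] at hz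
  have hsq : (z.re + ρ) ^ 2 + z.im ^ 2 ≤ ρ ^ 2 := by
    have := pow_le_pow_left₀ (norm_nonneg _) hz 2
    rwa [Complex.sq_norm, Complex.normSq_apply, add_re, add_im, ofReal_re, ofReal_im,
      add_zero, ← sq, ← sq] at this
  by_contra! hre
  have hρ : 0 ≤ ρ := (norm_nonneg _).trans hz
  exact h0 (Complex.ext (by rw [zero_re]; nlinarith) (by rw [zero_im]; nlinarith))

theorem re_mulVec_map_ofReal_apply {ι : Type*} [Fintype ι] (M : Matrix ι ι ℝ) (x : ι → ℂ)
    (i : ι) : ((M.map Complex.ofReal *ᵥ x) i).re = (M *ᵥ fun j => (x j).re) i := by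
  simp [mulVec, dotProduct, Complex.re_sum]

theorem im_mulVec_map_ofReal_apply {ι : Type*} [Fintype ι] (M : Matrix ι ι ℝ) (x : ι → ℂ)
    (i : ι) : ((M.map Complex.ofReal *ᵥ x) i).im = (M *ᵥ fun j => (x j).im) i := by
  simp [mulVec, dotProduct, Complex.im_sum]

/-- The generator of a continuous-time Markov chain. -/
structure IsRateMatrix {ι : Type*} [Fintype ι] (M : Matrix ι ι ℝ) : Prop where
  nonneg_of_ne : ∀ i j, i ≠ j → 0 ≤ M i j
  sum_row_eq_zero : ∀ i, ∑ j, M i j = 0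

namespace IsRateMatrix

variable {ι : Type*} [Fintype ι] {M : Matrix ι ι ℝ}

theorem mulVec_apply_eq_sum_mul_sub (hM : IsRateMatrix M) (u : ι → ℝ) (i : ι) :
    (M *ᵥ u) i = ∑ j, M i j * (u j - u i) := by
  simp only [mulVec, dotProduct, mul_sub, sum_sub_distrib, ← sum_mul, hM.sum_row_eq_zero,
    zero_mul, sub_zero]

theorem mul_sub_nonpos_of_isMax (hM : IsRateMatrix M) {u : ι → ℝ} {i : ι}
    (hi : ∀ j, u j ≤ u i) (j : ι) : M i j * (u j - u i) ≤ 0 := by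
  rcases eq_or_ne i j with rfl | hij
  · simp
  · exact mul_nonpos_of_nonneg_of_nonpos (hM.nonneg_of_ne i j hij) (sub_nonpos.2 (hi j))

theorem mulVec_apply_nonpos_of_isMax (hM : IsRateMatrix M) {u : ι → ℝ} {i : ι}
    (hi : ∀ j, u j ≤ u i) : (M *ᵥ u) i ≤ 0 := by
  rw [hM.mulVec_apply_eq_sum_mul_sub]
  exact sum_nonpos fun j _ => hM.mul_sub_nonpos_of_isMax hi j

theorem eq_of_isMax_of_mulVec_apply_eq_zero (hM : IsRateMatrix M) {u : ι → ℝ} {i j : ι}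
    (hi : ∀ j, u j ≤ u i) (h0 : (M *ᵥ u) i = 0) (hij : 0 < M i j) : u j = u i := by
  rw [hM.mulVec_apply_eq_sum_mul_sub,
    sum_eq_zero_iff_of_nonpos fun k _ => hM.mul_sub_nonpos_of_isMax hi k] at h0
  exact sub_eq_zero.1 ((mul_eq_zero.1 (h0 j (mem_univ j))).resolve_left hij.ne')

theorem eq_zero_of_mulVec_eq_const [Nonempty ι] (hM : IsRateMatrix M) {u : ι → ℝ} {c : ℝ}
    (hu : M *ᵥ u = fun _ => c) : c = 0 := by
  obtain ⟨i, hi⟩ := Finite.exists_max u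
  obtain ⟨i', hi'⟩ := Finite.exists_max (-u)
  have hmax := hM.mulVec_apply_nonpos_of_isMax hi
  have hmin := hM.mulVec_apply_nonpos_of_isMax hi'
  rw [mulVec_neg, hu] at hmin
  rw [hu] at hmax
  simp only [Pi.neg_apply, neg_nonpos] at hmin
  linarith

theorem eq_zero_of_mulVec_map_ofReal_eq_const [Nonempty ι] (hM : IsRateMatrix M) {x : ι → ℂ}
    {c : ℂ} (hx : M.map Complex.ofReal *ᵥ x = fun _ => c) : c = 0 := by
  refine Complex.ext (hM.eq_zero_of_mulVec_eq_const (u := fun j => (x j).re) ?_)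
    (hM.eq_zero_of_mulVec_eq_const (u := fun j => (x j).im) ?_) <;> ext i
  · rw [← re_mulVec_map_ofReal_apply, hx]
  · rw [← im_mulVec_map_ofReal_apply, hx]

variable {r : ι}

theorem le_root_of_mulVec_eq_zero (hM : IsRateMatrix M)
    (hreach : ∀ v, ReflTransGen (fun j k => 0 < M k j) r v) {u : ι → ℝ} (hu : M *ᵥ u = 0)
    (k : ι) : u k ≤ u r := by
  have : Nonempty ι := ⟨r⟩
  obtain ⟨i, hi⟩ := Finite.exists_max u
  -- the set of maximisers of `u` is closed under passing from a vertex to its parent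
  suffices ∀ v, ReflTransGen (fun j k => 0 < M k j) r v → (∀ j, u j ≤ u v) →
      ∀ j, u j ≤ u r from this i (hreach i) hi k
  intro v hv
  induction hv with
  | refl => exact id
  | @tail a b _ hab ih =>
    intro hb
    exact ih ((hM.eq_of_isMax_of_mulVec_apply_eq_zero hb (congrFun hu b) hab) ▸ hb)

theorem eq_root_of_mulVec_eq_zero (hM : IsRateMatrix M)
    (hreach : ∀ v, ReflTransGen (fun j k => 0 < M k j) r v) {u : ι → ℝ} (hu : M *ᵥ u = 0)
    (k : ι) : u k = u r := by
  have hu' : M *ᵥ (-u) = 0 := by rw [mulVec_neg, hu, neg_zero]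
  have hge := hM.le_root_of_mulVec_eq_zero hreach hu' k
  simp only [Pi.neg_apply, neg_le_neg_iff] at hge
  exact le_antisymm (hM.le_root_of_mulVec_eq_zero hreach hu k) hge

theorem eq_root_of_mulVec_map_ofReal_eq_zero (hM : IsRateMatrix M)
    (hreach : ∀ v, ReflTransGen (fun j k => 0 < M k j) r v) {x : ι → ℂ}
    (hx : M.map Complex.ofReal *ᵥ x = 0) (k : ι) : x k = x r := by
  refine Complex.ext (hM.eq_root_of_mulVec_eq_zero hreach (u := fun j => (x j).re) ?_ k)
    (hM.eq_root_of_mulVec_eq_zero hreach (u := fun j => (x j).im) ?_ k) <;> ext i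
  · rw [← re_mulVec_map_ofReal_apply, hx]; rfl
  · rw [← im_mulVec_map_ofReal_apply, hx]; rfl

variable [DecidableEq ι]

theorem ker_toLin'_map_ofReal (hM : IsRateMatrix M)
    (hreach : ∀ v, ReflTransGen (fun j k => 0 < M k j) r v) :
    LinearMap.ker (toLin' (M.map Complex.ofReal)) = ℂ ∙ fun _ => 1 := by
  ext x
  rw [LinearMap.mem_ker, toLin'_apply, Submodule.mem_span_singleton]
  constructor
  · intro hx
    exact ⟨x r, funext fun k => by
      simp [hM.eq_root_of_mulVec_map_ofReal_eq_zero hreach hx k]⟩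
  · rintro ⟨a, rfl⟩
    refine (mulVec_smul _ a _).trans (smul_eq_zero_of_right a (funext fun i => ?_))
    simp only [mulVec, dotProduct, Matrix.map_apply, mul_one, Pi.zero_apply]
    rw [← Complex.ofReal_sum, hM.sum_row_eq_zero, Complex.ofReal_zero]

theorem ker_toLin'_map_ofReal_sq (hM : IsRateMatrix M)
    (hreach : ∀ v, ReflTransGen (fun j k => 0 < M k j) r v) :
    LinearMap.ker (toLin' (M.map Complex.ofReal) ^ 2) =
      LinearMap.ker (toLin' (M.map Complex.ofReal)) := by
  have : Nonempty ι := ⟨r⟩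
  refine le_antisymm (fun x hx => ?_) (fun x hx => ?_)
  · rw [LinearMap.mem_ker, sq, Module.End.mul_apply, ← LinearMap.mem_ker,
      hM.ker_toLin'_map_ofReal hreach, Submodule.mem_span_singleton] at hx
    obtain ⟨a, ha⟩ := hx
    rw [toLin'_apply] at ha
    have hconst : M.map Complex.ofReal *ᵥ x = fun _ => a := by rw [← ha]; ext; simp
    rw [LinearMap.mem_ker, toLin'_apply, hconst, hM.eq_zero_of_mulVec_map_ofReal_eq_const hconst]
    rfl
  · rw [LinearMap.mem_ker] at hx ⊢
    rw [sq, Module.End.mul_apply, hx, map_zero]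

theorem maxGenEigenspace_toLin'_map_ofReal_zero (hM : IsRateMatrix M)
    (hreach : ∀ v, ReflTransGen (fun j k => 0 < M k j) r v) :
    Module.End.maxGenEigenspace (toLin' (M.map Complex.ofReal)) 0 = ℂ ∙ fun _ => 1 := by
  set f := toLin' (M.map Complex.ofReal)
  rw [← hM.ker_toLin'_map_ofReal hreach]
  ext x
  simp only [Module.End.mem_maxGenEigenspace, zero_smul, sub_zero, ← LinearMap.mem_ker]
  refine ⟨fun ⟨k, hk⟩ => ?_, fun hx => ⟨1, by rwa [pow_one]⟩⟩
  rcases k with _ | k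
  · simp_all
  · have hstable : LinearMap.ker (f ^ 1) = LinearMap.ker (f ^ (1 + k)) :=
      Module.End.ker_pow_constant (by rw [pow_one, hM.ker_toLin'_map_ofReal_sq hreach]) k
    rwa [add_comm, ← hstable, pow_one] at hk

theorem rootMultiplicity_zero_charpoly_map_ofReal (hM : IsRateMatrix M)
    (hreach : ∀ v, ReflTransGen (fun j k => 0 < M k j) r v) :
    (M.map Complex.ofReal).charpoly.rootMultiplicity 0 = 1 := by
  rw [← charpoly_toLin', ← LinearMap.finrank_maxGenEigenspace_eq,
    hM.maxGenEigenspace_toLin'_map_ofReal_zero hreach, finrank_span_singleton]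
  exact fun h => one_ne_zero (congrFun h r)

theorem re_neg_of_isRoot_charpoly_map_ofReal (hM : IsRateMatrix M) {μ : ℂ}
    (hμ : (M.map Complex.ofReal).charpoly.IsRoot μ) (h0 : μ ≠ 0) : μ.re < 0 := by
  rw [← charpoly_toLin', ← Module.End.hasEigenvalue_iff_isRoot_charpoly] at hμ
  obtain ⟨k, hk⟩ := eigenvalue_mem_ball hμ
  refine Complex.re_neg_of_mem_closedBall_neg (ρ := ∑ j ∈ univ.erase k, M k j) ?_ h0
  have hdiag : M k k = -∑ j ∈ univ.erase k, M k j := by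
    rw [eq_neg_iff_add_eq_zero, add_sum_erase _ _ (mem_univ k), hM.sum_row_eq_zero]
  convert hk using 2
  · rw [Matrix.map_apply, hdiag, Complex.ofReal_neg]
  · exact sum_congr rfl fun j hj => by
      rw [Matrix.map_apply, Complex.norm_of_nonneg (hM.nonneg_of_ne k j (ne_of_mem_erase hj).symm)]

end IsRateMatrix

theorem laplacian_simple_zero_general (N : ℕ) (H : Fin N → Fin N → Prop)
    (htree : ∃ (R : Fin N → Fin N → Prop) (r : Fin N),
      (∀ j k, R j k → H j k) ∧
      (∀ v, Relation.ReflTransGen (fun x y => R x y ∨ R y x) r v) ∧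
      (∀ j, ¬ R j r) ∧
      (∀ k, k ≠ r → ∃! j, R j k))
    (T : Matrix (Fin N) (Fin N) ℝ)
    (hpos : ∀ j k, j ≠ k → (H j k → 0 < T j k) ∧ (¬ H j k → T j k = 0))
    (hdiag : ∀ k, T k k = -∑ j ∈ Finset.univ.erase k, T j k) :
    Polynomial.rootMultiplicity 0 (T.map (Complex.ofReal)).charpoly = 1 ∧
    ∀ lam : ℂ, (T.map (Complex.ofReal)).charpoly.IsRoot lam → lam ≠ 0 → lam.re < 0 := by
  obtain ⟨R, r, hRH, hconn, hroot, hunique⟩ := htree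
  have hM : IsRateMatrix Tᵀ := by
    refine ⟨fun i j hij => ?_, fun i => ?_⟩
    · by_cases hji : H j i
      · exact ((hpos j i hij.symm).1 hji).le
      · exact ((hpos j i hij.symm).2 hji).ge
    · simp only [transpose_apply]
      rw [← add_sum_erase _ _ (mem_univ i), hdiag, neg_add_cancel]
  have hreach : ∀ v, ReflTransGen (fun j k => 0 < Tᵀ k j) r v := fun v => by
    have hparent : ∀ j j' k, R j k → R j' k → j = j' := fun j j' k hj hj' =>
      (hunique k fun hk => hroot j (hk ▸ hj)).unique hj hj'
    rw [← reflTransGen_reflGen]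
    refine ReflTransGen.mono (fun j k hjk => ?_) r v
      (reflTransGen_of_unique_parent hroot hparent (hconn v))
    rcases eq_or_ne j k with rfl | hne
    · exact .refl
    · exact .single ((hpos j k hne).1 (hRH j k hjk))
  rw [← charpoly_transpose, ← transpose_map]
  exact ⟨hM.rootMultiplicity_zero_charpoly_map_ofReal hreach,
    fun lam hlam h0 => hM.re_neg_of_isRoot_charpoly_map_ofReal hlam h0⟩

/-- if H admits a spanning diverging tree and T is the associated negative
Laplacian with positive weights exactly on the edges of H, then 0 is a simple eigenvalue of T
and all other eigenvalues have negative real part. -/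
theorem laplacian_simple_zero (N : ℕ) (H : Fin N → Fin N → Prop)
    (hloop : ∀ i, ¬ H i i)
    (htree : ∃ (R : Fin N → Fin N → Prop) (r : Fin N),
      (∀ j k, R j k → H j k) ∧
      (∀ v, Relation.ReflTransGen (fun x y => R x y ∨ R y x) r v) ∧
      (∀ j, ¬ R j r) ∧
      (∀ k, k ≠ r → ∃! j, R j k))
    (T : Matrix (Fin N) (Fin N) ℝ)
    (hpos : ∀ j k, j ≠ k → (H j k → 0 < T j k) ∧ (¬ H j k → T j k = 0))
    (hdiag : ∀ k, T k k = -∑ j ∈ Finset.univ.erase k, T j k) :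
    Polynomial.rootMultiplicity 0 (T.map (Complex.ofReal)).charpoly = 1 ∧
    ∀ lam : ℂ, (T.map (Complex.ofReal)).charpoly.IsRoot lam → lam ≠ 0 → lam.re < 0 :=
  laplacian_simple_zero_general N H htree T hpos hdiag
end
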